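/- Let J ⊂ ℝ^n be a compact convex set containing a point p ∈ ℚ^n, and let r := den(p). Then pllenv(cone J) = (plenv(cone J))_ℤ if and only if (plenv(cone J))_ℤ = (cone J)_ℤ \ (cone J + rα(p))_ℤ. -/

import Mathlib

open Set Pointwise
open scoped Classical

noncomputable section

namespace ArxivFreeSum

/-- A point of `ℝ^m` is an integer lattice point iff all coordinates are integers. -/
def IsLat {m : ℕ} (x : Fin m → ℝ) : Prop := ∀ i, ∃ z : ℤ, x i = (z : ℝ)

/-- The set of integer lattice points of a set `S`. -/
def latt {m : ℕ} (S : Set (Fin m → ℝ)) : Set (Fin m → ℝ) := {x | x ∈ S ∧ IsLat x}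

variable {n : ℕ}

/-- The affine embedding `α : ℝ^n → ℝ^{n+1}`, `a ↦ (a, 1)`. -/
def emb (a : Fin n → ℝ) : Fin (n + 1) → ℝ := Fin.snoc a 1

/-- The cone over `K`: all nonnegative multiples of `α(K)`. -/
def cone (K : Set (Fin n → ℝ)) : Set (Fin (n + 1) → ℝ) :=
  {x | ∃ l : ℝ, ∃ a ∈ K, 0 ≤ l ∧ x = l • emb a}

/-- The last standard basis vector `e_{n+1}` of `ℝ^{n+1}`. -/
def eLast (n : ℕ) : Fin (n + 1) → ℝ := Pi.single (Fin.last n) 1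

/-- The vertical projection `ε_J` onto the lower envelope of `cone J`. -/
def eps (J : Set (Fin n → ℝ)) (x : Fin (n + 1) → ℝ) : Fin (n + 1) → ℝ :=
  x - sSup {l : ℝ | x - l • eLast n ∈ cone J} • eLast n

/-- The lower envelope of `cone J`. -/
def lenv (J : Set (Fin n → ℝ)) : Set (Fin (n + 1) → ℝ) := eps J '' cone J

/-- The lower lattice envelope of `cone J`. -/
def llenv (J : Set (Fin n → ℝ)) : Set (Fin (n + 1) → ℝ) := eps J '' latt (cone J)

/-- `J ⊕ K` is a free sum. -/
def IsFreeSum (J K : Set (Fin n → ℝ)) : Prop :=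
  (0 : Fin n → ℝ) ∈ J ∧ (0 : Fin n → ℝ) ∈ K ∧
    ∀ m : Fin n → ℝ, m ∈ Submodule.span ℝ (J ∪ K) → IsLat m →
      ∃! q : (Fin n → ℝ) × (Fin n → ℝ),
        (q.1 ∈ Submodule.span ℝ J ∧ IsLat q.1) ∧
        (q.2 ∈ Submodule.span ℝ K ∧ IsLat q.2) ∧ m = q.1 + q.2

/-- `N_{J,K}(m)`: the number of pairs of lattice points of `cone J` and `cone K` summing
to `m`. -/
def Npairs (J K : Set (Fin n → ℝ)) (m : Fin (n + 1) → ℤ) : ℕ :=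
  Set.ncard {q : (Fin (n + 1) → ℝ) × (Fin (n + 1) → ℝ) |
    q.1 ∈ latt (cone J) ∧ q.2 ∈ latt (cone K) ∧ q.1 + q.2 = fun i => (m i : ℝ)}

/-- The coefficientwise form of the multivariate Braun equation
`σ_{cone(J⊕K)} = (1 - z_{n+1}) σ_{cone J} σ_{cone K}`. -/
def BraunEq (J K : Set (Fin n → ℝ)) : Prop :=
  ∀ m : Fin (n + 1) → ℤ,
    (Npairs J K m : ℤ) - (Npairs J K (m - Pi.single (Fin.last n) 1) : ℤ) =
      if (fun i => (m i : ℝ)) ∈ cone (convexHull ℝ (J ∪ K)) then 1 else 0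

/-- A rational polytope: convex hull of finitely many rational points. -/
def IsRatPolytope (P : Set (Fin n → ℝ)) : Prop :=
  ∃ V : Finset (Fin n → ℝ), (∀ v ∈ V, ∀ i, ∃ q : ℚ, v i = (q : ℝ)) ∧
    P = convexHull ℝ (V : Set (Fin n → ℝ))

/-- A lattice polytope: convex hull of finitely many lattice points. -/
def IsLatPolytope (P : Set (Fin n → ℝ)) : Prop :=
  ∃ V : Finset (Fin n → ℝ), (∀ v ∈ V, IsLat v) ∧ P = convexHull ℝ (V : Set (Fin n → ℝ))

/-- The polar dual `P^∨ ⊆ (lin P)^*` of a polytope `P` containing the origin. -/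
def dualSet (P : Set (Fin n → ℝ)) : Set (Module.Dual ℝ (Submodule.span ℝ P)) :=
  {φ | ∀ a : Submodule.span ℝ P, (a : Fin n → ℝ) ∈ P → φ a ≤ 1}

/-- Membership in the dual integer lattice `(lin P)^*_ℤ`. -/
def IsDualLatticePt (P : Set (Fin n → ℝ)) (φ : Module.Dual ℝ (Submodule.span ℝ P)) : Prop :=
  ∀ a : Submodule.span ℝ P, IsLat (a : Fin n → ℝ) → ∃ z : ℤ, φ a = (z : ℝ)

/-- `P^∨` is a lattice polyhedron: every vertex (= extreme point) of `P^∨` lies in the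
dual integer lattice. -/
def DualIsLatticePolyhedron (P : Set (Fin n → ℝ)) : Prop :=
  ∀ φ ∈ Set.extremePoints ℝ (dualSet P), IsDualLatticePt P φ

/-- `den(P^∨)`: the smallest positive integer `d` such that `d • P^∨` is a lattice
polyhedron. -/
def dualDen (P : Set (Fin n → ℝ)) : ℕ :=
  sInf {d : ℕ | 0 < d ∧ ∀ φ ∈ Set.extremePoints ℝ (dualSet P), IsDualLatticePt P ((d : ℝ) • φ)}

/-- `L_P(k)`, with `L_P(0) = 1`. -/
def ehr (P : Set (Fin n → ℝ)) (k : ℕ) : ℕ :=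
  if k = 0 then 1 else Set.ncard (latt ((k : ℝ) • P))

/-- The coefficientwise form of `Ehr_{P⊕Q}(t) = (1-t) Ehr_P(t) Ehr_Q(t)`. -/
def EhrEq (P Q : Set (Fin n → ℝ)) : Prop :=
  ∀ k : ℕ,
    (ehr (convexHull ℝ (P ∪ Q)) k : ℤ) =
      (∑ i ∈ Finset.range (k + 1), (ehr P i : ℤ) * (ehr Q (k - i) : ℤ)) -
        ∑ i ∈ Finset.range k, (ehr P i : ℤ) * (ehr Q (k - 1 - i) : ℤ)

/-- `P` is reflexive: a lattice polytope containing the origin in its relative interior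
whose polar dual is a lattice polytope. -/
def IsReflexive (P : Set (Fin n → ℝ)) : Prop :=
  IsLatPolytope P ∧ (0 : Fin n → ℝ) ∈ intrinsicInterior ℝ P ∧ DualIsLatticePolyhedron P

/-- `P` is Gorenstein of index `k`. -/
def IsGorenstein (P : Set (Fin n → ℝ)) (k : ℕ) : Prop :=
  IsLatPolytope P ∧ 0 < k ∧
    ∃ m : Fin n → ℝ, IsLat m ∧ IsReflexive ((fun x => x - m) '' ((k : ℝ) • P))

/-- `p` is a rational point. -/
def IsRatPt (p : Fin n → ℝ) : Prop := ∀ i, ∃ q : ℚ, p i = (q : ℝ)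

/-- Membership in the lattice `Λ^p` generated by `e_1, …, e_n` and `p`. -/
def InLambda (p x : Fin n → ℝ) : Prop :=
  ∃ (z : Fin n → ℤ) (c : ℤ), x = (fun i => (z i : ℝ)) + (c : ℝ) • p

/-- `den(p)`: the lcm of the denominators of the coordinates of `p`, i.e. the least
positive integer `r` with `r • p` a lattice point. -/
def denPt (p : Fin n → ℝ) : ℕ := sInf {r : ℕ | 0 < r ∧ IsLat ((r : ℝ) • p)}

/-- The projection `ε^p_J` parallel to `α(p)` onto the `p`-lower envelope of `cone J`. -/
def epsP (p : Fin n → ℝ) (J : Set (Fin n → ℝ)) (x : Fin (n + 1) → ℝ) : Fin (n + 1) → ℝ :=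
  x - sSup {l : ℝ | x - l • emb p ∈ cone J} • emb p

/-- The `p`-lower envelope of `cone J`. -/
def plenv (p : Fin n → ℝ) (J : Set (Fin n → ℝ)) : Set (Fin (n + 1) → ℝ) := epsP p J '' cone J

/-- The `p`-lower lattice envelope of `cone J`. -/
def pllenv (p : Fin n → ℝ) (J : Set (Fin n → ℝ)) : Set (Fin (n + 1) → ℝ) :=
  epsP p J '' latt (cone J)

/-- `J ⊕ K` is an affine free sum with common (rational) point `p`. -/
def IsAffineFreeSum (J K : Set (Fin n → ℝ)) (p : Fin n → ℝ) : Prop :=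
  IsRatPt p ∧ p ∈ J ∧ p ∈ K ∧
    ((affineSpan ℝ J : Set (Fin n → ℝ)) ∩ (affineSpan ℝ K : Set (Fin n → ℝ)) = {p}) ∧
    ∀ m : Fin n → ℝ, m ∈ Submodule.span ℝ ((fun x => x - p) '' (J ∪ K)) → InLambda p m →
      ∃! q : (Fin n → ℝ) × (Fin n → ℝ),
        (q.1 ∈ Submodule.span ℝ ((fun x => x - p) '' J) ∧ InLambda p q.1) ∧
        (q.2 ∈ Submodule.span ℝ ((fun x => x - p) '' K) ∧ InLambda p q.2) ∧ m = q.1 + q.2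

/-!
For `x ∈ cone J` let `λ(x)` be the largest `λ` with `x - λ α(p) ∈ cone J`: the admissible `λ`
form a closed half-line, by convexity, `p ∈ J`, and because the cone over a compact set is closed.
Then `plenv(cone J)` is the set of points of the cone with `λ = 0`, while a point of the cone lies
in `cone J + r α(p)` iff `λ ≥ r`. So (b) says that every lattice point `x` of the cone with
`λ(x) < r` has `λ(x) = 0`, and (a) says that `λ(x) α(p)` is a lattice point for every lattice
point `x` of the cone, i.e. `λ(x) ∈ rℕ`. For (b) ⇒ (a), subtracting `⌊λ(x)/r⌋ r α(p)` from `x`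
gives a lattice point of the cone whose `λ` is `λ(x)` reduced modulo `r`, hence `0`.
-/

section Lattice

lemma IsLat.sub {m : ℕ} {x y : Fin m → ℝ} (hx : IsLat x) (hy : IsLat y) : IsLat (x - y) :=
  fun i => by
    obtain ⟨a, ha⟩ := hx i
    obtain ⟨b, hb⟩ := hy i
    exact ⟨a - b, by simp [ha, hb]⟩

lemma IsLat.zsmul {m : ℕ} {x : Fin m → ℝ} (hx : IsLat x) (k : ℤ) : IsLat (k • x) :=
  fun i => by
    obtain ⟨a, ha⟩ := hx i
    exact ⟨k * a, by simp [ha]⟩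

lemma isLat_smul_emb_iff {c : ℝ} {a : Fin n → ℝ} :
    IsLat (c • emb a) ↔ IsLat (c • a) ∧ ∃ z : ℤ, c = z := by
  simp [IsLat, Fin.forall_fin_succ', emb]

lemma exists_pos_isLat_nsmul {p : Fin n → ℝ} (hp : IsRatPt p) :
    ∃ N : ℕ, 0 < N ∧ IsLat ((N : ℝ) • p) := by
  choose q hq using hp
  refine ⟨∏ i, (q i).den, Finset.prod_pos fun i _ => (q i).pos, fun i => ?_⟩
  obtain ⟨m, hm⟩ := Finset.dvd_prod_of_mem (fun j => (q j).den) (Finset.mem_univ i)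
  refine ⟨m * (q i).num, ?_⟩
  have hnum : ((q i).den * m : ℚ) * q i = m * (q i).num := by
    rw [← Rat.mul_den_eq_num]; ring
  rw [Pi.smul_apply, smul_eq_mul, hq i, hm]
  exact_mod_cast hnum

lemma denPt_pos {p : Fin n → ℝ} (hp : IsRatPt p) : 0 < denPt p :=
  (Nat.sInf_mem (exists_pos_isLat_nsmul hp)).1

lemma isLat_denPt_smul {p : Fin n → ℝ} (hp : IsRatPt p) : IsLat ((denPt p : ℝ) • p) :=
  (Nat.sInf_mem (exists_pos_isLat_nsmul hp)).2

lemma isLat_denPt_smul_emb {p : Fin n → ℝ} (hp : IsRatPt p) :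
    IsLat ((denPt p : ℝ) • emb p) :=
  isLat_smul_emb_iff.2 ⟨isLat_denPt_smul hp, denPt p, by simp⟩

lemma eq_zero_of_isLat_smul_emb {p : Fin n → ℝ} {c : ℝ} (hc : 0 ≤ c) (hcr : c < denPt p)
    (h : IsLat (c • emb p)) : c = 0 := by
  obtain ⟨hlat, z, rfl⟩ := isLat_smul_emb_iff.1 h
  lift z to ℕ using by exact_mod_cast hc
  by_contra hz
  have hle : denPt p ≤ z :=
    Nat.sInf_le ⟨Nat.pos_of_ne_zero (by exact_mod_cast hz), by simpa using hlat⟩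
  exact hle.not_gt (by exact_mod_cast hcr)

end Lattice

section Cone

@[simp] lemma emb_last (a : Fin n → ℝ) : emb a (Fin.last n) = 1 := Fin.snoc_last _ _

@[simp] lemma emb_castSucc (a : Fin n → ℝ) (j : Fin n) : emb a j.castSucc = a j :=
  Fin.snoc_castSucc _ _ _

lemma continuous_emb : Continuous (emb : (Fin n → ℝ) → Fin (n + 1) → ℝ) :=
  continuous_id.finSnoc (A := fun _ => ℝ) continuous_const

lemma emb_add_smul {a b : Fin n → ℝ} {s t : ℝ} (hst : s + t = 1) :
    emb (s • a + t • b) = s • emb a + t • emb b := by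
  ext i
  induction i using Fin.lastCases <;> simp [hst]

variable {J : Set (Fin n → ℝ)}

lemma smul_emb_mem_cone {a : Fin n → ℝ} (ha : a ∈ J) {l : ℝ} (hl : 0 ≤ l) :
    l • emb a ∈ cone J :=
  ⟨l, a, ha, hl, rfl⟩

lemma last_nonneg_of_mem_cone {x : Fin (n + 1) → ℝ} (hx : x ∈ cone J) : 0 ≤ x (Fin.last n) := by
  obtain ⟨l, a, -, hl, rfl⟩ := hx
  simpa using hl

lemma add_mem_cone (hJ : Convex ℝ J) {x y : Fin (n + 1) → ℝ} (hx : x ∈ cone J)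
    (hy : y ∈ cone J) : x + y ∈ cone J := by
  obtain ⟨l, a, ha, hl, rfl⟩ := hx
  obtain ⟨k, b, hb, hk, rfl⟩ := hy
  rcases (add_nonneg hl hk).eq_or_lt with hlk | hlk
  · obtain ⟨rfl, rfl⟩ : l = 0 ∧ k = 0 := ⟨by linarith, by linarith⟩
    simpa using smul_emb_mem_cone ha le_rfl
  · have hcomb : l / (l + k) + k / (l + k) = 1 := by field_simp
    refine ⟨l + k, _, hJ ha hb (by positivity) (by positivity) hcomb, hlk.le, ?_⟩
    rw [emb_add_smul hcomb, smul_add, smul_smul, smul_smul, mul_div_cancel₀ _ hlk.ne',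
      mul_div_cancel₀ _ hlk.ne']

/-- Below any height `T` the cone is the compact image of `[0, T] × J`, and every point has an
open neighbourhood below some height. -/
lemma isClosed_cone (hJ : IsCompact J) : IsClosed (cone J) := by
  refine closure_subset_iff_isClosed.1 fun x hx => ?_
  set T := x (Fin.last n) + 1
  have hslab : {y | y (Fin.last n) ≤ T} ∩ cone J =
      (fun q : ℝ × (Fin n → ℝ) => q.1 • emb q.2) '' (Icc 0 T ×ˢ J) := by
    ext y
    constructor
    · rintro ⟨hyT, l, a, ha, hl, rfl⟩
      exact ⟨(l, a), ⟨⟨hl, by simpa using hyT⟩, ha⟩, rfl⟩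
    · rintro ⟨⟨l, a⟩, ⟨⟨hl, hlT⟩, ha⟩, rfl⟩
      exact ⟨by simpa using hlT, smul_emb_mem_cone ha hl⟩
  have hclosed : IsClosed ({y | y (Fin.last n) ≤ T} ∩ cone J) := by
    rw [hslab]
    exact ((isCompact_Icc.prod hJ).image
      (continuous_fst.smul (continuous_emb.comp continuous_snd))).isClosed
  have hopen : IsOpen {y : Fin (n + 1) → ℝ | y (Fin.last n) < T} :=
    isOpen_lt (continuous_apply _) continuous_const
  have hxT : x (Fin.last n) < T := by simp [T]
  have := hopen.inter_closure ⟨hxT, hx⟩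
  refine (hclosed.closure_subset (closure_mono ?_ this)).2
  exact inter_subset_inter_left _ fun y (hy : y (Fin.last n) < T) => hy.le

end Cone

section MaxShift

variable (p : Fin n → ℝ) (J : Set (Fin n → ℝ))

/-- The `λ` in `ε^p_J x = x - λ α(p)`; for `x ∈ cone J` the supremum is attained
(`sub_maxShift_smul_mem_cone`). -/
def maxShift (x : Fin (n + 1) → ℝ) : ℝ := sSup {l : ℝ | x - l • emb p ∈ cone J}

lemma epsP_eq_sub_maxShift (x : Fin (n + 1) → ℝ) : epsP p J x = x - maxShift p J x • emb p :=
  rfl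

variable {p J} {x : Fin (n + 1) → ℝ}

lemma bddAbove_shifts : BddAbove {l : ℝ | x - l • emb p ∈ cone J} :=
  ⟨x (Fin.last n), fun l hl => by simpa using last_nonneg_of_mem_cone hl⟩

lemma sub_smul_emb_mem_cone_of_le (hJ : Convex ℝ J) (hpJ : p ∈ J) {l l' : ℝ}
    (hl : x - l • emb p ∈ cone J) (hl' : l' ≤ l) : x - l' • emb p ∈ cone J := by
  convert add_mem_cone hJ hl (smul_emb_mem_cone hpJ (sub_nonneg.2 hl')) using 1
  module

lemma sub_maxShift_smul_mem_cone (hJc : IsCompact J) (hx : x ∈ cone J) :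
    x - maxShift p J x • emb p ∈ cone J := by
  have hclosed : IsClosed {l : ℝ | x - l • emb p ∈ cone J} :=
    (isClosed_cone hJc).preimage (continuous_const.sub (continuous_id.smul continuous_const))
  exact hclosed.csSup_mem ⟨0, by simpa using hx⟩ bddAbove_shifts

lemma le_maxShift_iff (hJ : Convex ℝ J) (hJc : IsCompact J) (hpJ : p ∈ J) (hx : x ∈ cone J)
    {l : ℝ} : l ≤ maxShift p J x ↔ x - l • emb p ∈ cone J :=
  ⟨sub_smul_emb_mem_cone_of_le hJ hpJ (sub_maxShift_smul_mem_cone hJc hx),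
    fun hl => le_csSup bddAbove_shifts hl⟩

lemma maxShift_nonneg (hJ : Convex ℝ J) (hJc : IsCompact J) (hpJ : p ∈ J) (hx : x ∈ cone J) :
    0 ≤ maxShift p J x :=
  (le_maxShift_iff hJ hJc hpJ hx).2 (by simpa using hx)

lemma maxShift_sub_smul (hJ : Convex ℝ J) (hJc : IsCompact J) (hpJ : p ∈ J) (hx : x ∈ cone J)
    {t : ℝ} (ht : t ≤ maxShift p J x) :
    maxShift p J (x - t • emb p) = maxShift p J x - t := by
  have hxt := (le_maxShift_iff hJ hJc hpJ hx).1 ht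
  refine eq_of_forall_le_iff fun l => ?_
  rw [le_maxShift_iff hJ hJc hpJ hxt, le_sub_iff_add_le, le_maxShift_iff hJ hJc hpJ hx,
    sub_sub, ← add_smul, add_comm t l]

lemma mem_plenv_iff (hJ : Convex ℝ J) (hJc : IsCompact J) (hpJ : p ∈ J) :
    x ∈ plenv p J ↔ x ∈ cone J ∧ maxShift p J x = 0 := by
  constructor
  · rintro ⟨y, hy, rfl⟩
    rw [epsP_eq_sub_maxShift, maxShift_sub_smul hJ hJc hpJ hy le_rfl, sub_self]
    exact ⟨sub_maxShift_smul_mem_cone hJc hy, rfl⟩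
  · rintro ⟨hx, h0⟩
    exact ⟨x, hx, by simp [epsP_eq_sub_maxShift, h0]⟩

end MaxShift

section Envelope

variable {p : Fin n → ℝ} {J : Set (Fin n → ℝ)}

lemma pllenv_eq_latt_plenv_iff (hJ : Convex ℝ J) (hJc : IsCompact J) (hpJ : p ∈ J) :
    pllenv p J = latt (plenv p J) ↔ ∀ x ∈ latt (cone J), IsLat (maxShift p J x • emb p) := by
  constructor
  · intro h x hx
    obtain ⟨-, hlat⟩ : epsP p J x ∈ latt (plenv p J) := h ▸ mem_image_of_mem _ hx
    simpa [epsP_eq_sub_maxShift] using hx.2.sub hlat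
  · intro h
    refine Subset.antisymm (image_subset_iff.2 fun x hx => ⟨⟨x, hx.1, rfl⟩, hx.2.sub (h x hx)⟩) ?_
    rintro x ⟨hx, hlat⟩
    obtain ⟨hxJ, h0⟩ := (mem_plenv_iff hJ hJc hpJ).1 hx
    exact ⟨x, ⟨hxJ, hlat⟩, by simp [epsP_eq_sub_maxShift, h0]⟩

lemma mem_latt_cone_diff_iff (hJ : Convex ℝ J) (hJc : IsCompact J) (hpJ : p ∈ J) {c : ℝ}
    {x : Fin (n + 1) → ℝ} :
    x ∈ latt (cone J) \ latt ((fun y => y + c • emb p) '' cone J) ↔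
      x ∈ latt (cone J) ∧ maxShift p J x < c := by
  have hshift : x ∈ (fun y => y + c • emb p) '' cone J ↔ x - c • emb p ∈ cone J :=
    ⟨by rintro ⟨y, hy, rfl⟩; simpa using hy, fun h => ⟨_, h, sub_add_cancel _ _⟩⟩
  simp only [mem_sdiff, latt, mem_ofPred_eq, hshift]
  constructor
  · rintro ⟨hx, hnot⟩
    exact ⟨hx, not_le.1 fun hle => hnot ⟨(le_maxShift_iff hJ hJc hpJ hx.1).1 hle, hx.2⟩⟩
  · rintro ⟨hx, hlt⟩
    exact ⟨hx, fun h => hlt.not_ge ((le_maxShift_iff hJ hJc hpJ hx.1).2 h.1)⟩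

lemma latt_plenv_eq_diff_iff (hJ : Convex ℝ J) (hJc : IsCompact J) (hpJ : p ∈ J) {c : ℝ}
    (hc : 0 < c) :
    latt (plenv p J) = latt (cone J) \ latt ((fun y => y + c • emb p) '' cone J) ↔
      ∀ x ∈ latt (cone J), maxShift p J x < c → maxShift p J x = 0 := by
  simp only [Set.ext_iff, mem_latt_cone_diff_iff hJ hJc hpJ]
  simp only [latt, mem_ofPred_eq, mem_plenv_iff hJ hJc hpJ]
  refine ⟨fun h x hx hlt => ((h x).2 ⟨hx, hlt⟩).1.2, fun h x => ?_⟩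
  exact ⟨fun ⟨⟨hxJ, h0⟩, hlat⟩ => ⟨⟨hxJ, hlat⟩, h0 ▸ hc⟩,
    fun ⟨hx, hlt⟩ => ⟨⟨hx.1, h x hx hlt⟩, hx.2⟩⟩

end Envelope

theorem pllenv_eq_iff_rind_general {n : ℕ} (J : Set (Fin n → ℝ))
    (hJconv : Convex ℝ J) (hJcpt : IsCompact J) (p : Fin n → ℝ) (hp : IsRatPt p)
    (hpJ : p ∈ J) :
    pllenv p J = latt (plenv p J) ↔
      latt (plenv p J) =
        latt (cone J) \ latt ((fun x => x + (denPt p : ℝ) • emb p) '' cone J) := by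
  have hr : (0 : ℝ) < denPt p := by exact_mod_cast denPt_pos hp
  rw [pllenv_eq_latt_plenv_iff hJconv hJcpt hpJ, latt_plenv_eq_diff_iff hJconv hJcpt hpJ hr]
  refine ⟨fun h x hx hlt =>
    eq_zero_of_isLat_smul_emb (maxShift_nonneg hJconv hJcpt hpJ hx.1) hlt (h x hx), fun h x hx => ?_⟩
  set m := maxShift p J x
  obtain ⟨hmod0, hmodr⟩ := toIcoMod_mem_Ico hr 0 m
  have hdiv := self_sub_toIcoMod hr 0 m
  set k := toIcoDiv hr 0 m
  have hkm : k • (denPt p : ℝ) ≤ m := by linarith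
  have hlat_k : IsLat ((k • (denPt p : ℝ)) • emb p) := by
    rw [smul_assoc]; exact (isLat_denPt_smul_emb hp).zsmul k
  have hx' : x - (k • (denPt p : ℝ)) • emb p ∈ latt (cone J) :=
    ⟨(le_maxShift_iff hJconv hJcpt hpJ hx.1).1 hkm, hx.2.sub hlat_k⟩
  have hm' := maxShift_sub_smul hJconv hJcpt hpJ hx.1 hkm
  have hzero := h _ hx' (by rw [hm']; linarith)
  rwa [show m = k • (denPt p : ℝ) by linarith]

/-- Proposition 5.5, (a) ↔ (b). -/
theorem pllenv_eq_iff_rind {n : ℕ} (hn : 1 ≤ n) (J : Set (Fin n → ℝ))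
    (hJconv : Convex ℝ J) (hJcpt : IsCompact J) (p : Fin n → ℝ) (hp : IsRatPt p)
    (hpJ : p ∈ J) :
    pllenv p J = latt (plenv p J) ↔
      latt (plenv p J) =
        latt (cone J) \ latt ((fun x => x + (denPt p : ℝ) • emb p) '' cone J) :=
  pllenv_eq_iff_rind_general J hJconv hJcpt p hp hpJ

end ArxivFreeSum
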